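/- arXiv:1309.7475 — 4 statements merged into one kernel-verified Lean document; each statement's English description precedes it below -/
import Mathlib

section
/- Let s, r be natural numbers with 1 ≤ s ≤ r. In the polynomial ring 𝔽₂[a,b], the element b^(r+1) belongs to the ideal generated by a^(s+1) and the sum ∑_{i=0}^{s} a^i * b^(r-i). -/
open MvPolynomial

theorem milnor_relation_real (s r : ℕ) (hs : 1 ≤ s) (hsr : s ≤ r) :
    (X 1 : MvPolynomial (Fin 2) (ZMod 2)) ^ (r + 1) ∈
      Ideal.span {(X 0 : MvPolynomial (Fin 2) (ZMod 2)) ^ (s + 1),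
        ∑ i ∈ Finset.range (s + 1), (X 0 : MvPolynomial (Fin 2) (ZMod 2)) ^ i * X 1 ^ (r - i)} := by
  rw [Ideal.mem_span_pair]
  refine ⟨X 1 ^ (r - s), X 0 + X 1, ?_⟩
  have key : ∀ i ∈ Finset.range (s + 1),
      (X 0 + X 1 : MvPolynomial (Fin 2) (ZMod 2)) * (X 0 ^ i * X 1 ^ (r - i)) =
      (fun j => (X 0 : MvPolynomial (Fin 2) (ZMod 2)) ^ j * X 1 ^ (r + 1 - j)) (i + 1) -
      (fun j => (X 0 : MvPolynomial (Fin 2) (ZMod 2)) ^ j * X 1 ^ (r + 1 - j)) i := by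
    intro i hi
    have hir : i ≤ r := le_trans (Nat.lt_succ_iff.mp (Finset.mem_range.mp hi)) hsr
    simp only []
    rw [CharTwo.sub_eq_add, show r + 1 - (i + 1) = r - i from by omega,
      show r + 1 - i = (r - i) + 1 from by omega]
    ring
  rw [Finset.mul_sum, Finset.sum_congr rfl key, Finset.sum_range_sub (f := fun j => (X 0 : MvPolynomial (Fin 2) (ZMod 2)) ^ j * X 1 ^ (r + 1 - j))]
  have h2 : (2 : MvPolynomial (Fin 2) (ZMod 2)) = 0 := by
    have := CharP.cast_eq_zero (MvPolynomial (Fin 2) (ZMod 2)) 2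
    simpa using this
  simp only [pow_zero, one_mul, Nat.sub_zero, show r + 1 - (s + 1) = r - s from by omega]
  linear_combination (X 0 ^ (s + 1) * X 1 ^ (r - s) - X 1 ^ (r + 1) :
    MvPolynomial (Fin 2) (ZMod 2)) * h2
end

section
/- Let s, r be natural numbers with 1 ≤ s ≤ r. In the polynomial ring 𝔽₂[a,b], the element b^r does NOT belong to the ideal generated by a^(s+1) and ∑_{i=0}^{s} a^i * b^(r-i). -/
/-!
Map `𝔽₂[a,b]` to the dual numbers over `𝔽₂[b]` by `a ↦ ε`. Then `a^(s+1) ↦ 0` and the second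
generator becomes `b^(r-1) (b + ε)`. If `b^r = z b^(r-1) (b + ε)`, comparing the parts free of `ε`
gives `z ≡ 1 mod ε`, and then the `ε`-part says `b^(r-1)` is a multiple of `b^r`, which is absurd.
-/

namespace DualNumber

open TrivSqZeroExt

variable {A : Type*} [CommRing A]

theorem eps_pow_eq_zero {n : ℕ} (hn : 2 ≤ n) : (ε : A[ε]) ^ n = 0 := by
  rw [← Nat.sub_add_cancel hn, pow_add, sq, eps_mul_eps, mul_zero]

theorem sum_range_eps_pow_mul {s : ℕ} (hs : 1 ≤ s) (b : A[ε]) (r : ℕ) :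
    ∑ k ∈ Finset.range (s + 1), ε ^ k * b ^ (r - k) = b ^ r + ε * b ^ (r - 1) := by
  obtain ⟨t, rfl⟩ := Nat.exists_eq_add_of_le' hs
  simp only [Finset.sum_range_succ', eps_pow_eq_zero (Nat.le_add_left 2 _)]
  simp [add_comm]

open Polynomial in
theorem inl_X_pow_notMem_span [Nontrivial A] {r : ℕ} (hr : r ≠ 0) :
    (inl X : A[X][ε]) ^ r ∉ Ideal.span {inl X ^ r + ε * inl X ^ (r - 1)} := by
  rw [Ideal.mem_span_singleton']
  rintro ⟨z, hz⟩
  have hfst : z.fst * X ^ r = X ^ r := by simpa using congrArg fst hz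
  have hsnd : z.fst * X ^ (r - 1) + z.snd * X ^ r = 0 := by simpa using congrArg snd hz
  have hz1 : z.fst = 1 := by
    rwa [← sub_eq_zero, ← sub_one_mul, (monic_X_pow r).mul_left_eq_zero_iff, sub_eq_zero] at hfst
  have hr' : ¬r ≤ r - 1 := by omega
  simpa [hz1, coeff_mul_X_pow', hr'] using congrArg (coeff · (r - 1)) hsnd

end DualNumber

namespace MvPolynomial

open DualNumber TrivSqZeroExt

theorem X_pow_notMem_span_X_pow_succ_sum {A σ : Type*} [CommRing A] [Nontrivial A] {i j : σ}
    (hij : i ≠ j) {r s : ℕ} (hs : 1 ≤ s) (hr : r ≠ 0) :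
    (X j : MvPolynomial σ A) ^ r ∉
      Ideal.span {X i ^ (s + 1), ∑ k ∈ Finset.range (s + 1), X i ^ k * X j ^ (r - k)} := by
  classical
  intro h
  have himage := Ideal.mem_map_of_mem
    (aeval (R := A) (Function.update (fun _ => inl Polynomial.X) i (ε : (Polynomial A)[ε]))) h
  rw [Ideal.map_span, Set.image_pair] at himage
  simp only [map_pow, map_sum, map_mul, aeval_X, Function.update_self,
    Function.update_of_ne hij.symm, eps_pow_eq_zero (Nat.succ_le_succ hs),
    sum_range_eps_pow_mul hs, Ideal.span_insert_zero] at himage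
  exact inl_X_pow_notMem_span hr himage

end MvPolynomial

open MvPolynomial

theorem milnor_br_nonzero (s r : ℕ) (hs : 1 ≤ s) (hsr : s ≤ r) :
    (X 1 : MvPolynomial (Fin 2) (ZMod 2)) ^ r ∉
      Ideal.span {(X 0 : MvPolynomial (Fin 2) (ZMod 2)) ^ (s + 1),
        ∑ i ∈ Finset.range (s + 1), (X 0 : MvPolynomial (Fin 2) (ZMod 2)) ^ i * X 1 ^ (r - i)} :=
  X_pow_notMem_span_X_pow_succ_sum Fin.zero_ne_one hs (by omega : r ≠ 0)
end

section
/- Let s, r be natural numbers with 1 ≤ s ≤ r. The quotient ring 𝔽₂[a,b]/⟨a^(s+1), ∑_{i=0}^{s} a^i b^(r-i)⟩ has dimension r·(s+1) as an 𝔽₂-vector space. -/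
/-!
Sending `a ↦ C X` and `b ↦ X` identifies `K[a, b]` with `K[X][X]`. There the second relation is
monic of degree `r` in `b`, since all its other terms have `b`-degree below `r` once `r ≥ 1`.
So the quotient is `A[b] / (g)` with `A = K[a] / (a ^ (s + 1))`; it is free of rank `r` over `A`,
which is free of rank `s + 1` over `K`, and the tower law gives `r * (s + 1)`.
-/

open MvPolynomial

namespace Polynomial

theorem finrank_quotient_span_monic {K A : Type*} [CommRing K] [StrongRankCondition K]
    [CommRing A] [Nontrivial A] [Algebra K A] [Module.Free K A] {g : A[X]} (hg : g.Monic) :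
    Module.finrank K (A[X] ⧸ Ideal.span {g}) = Module.finrank K A * g.natDegree := by
  have := hg.free_quotient
  rw [← Module.finrank_mul_finrank K A, finrank_quotient_span_eq_natDegree' hg]

noncomputable def quotientMapCSupSpanEquiv {R : Type*} [CommRing R] (I : Ideal R) (g : R[X]) :
    (R[X] ⧸ I.map C ⊔ Ideal.span {g}) ≃ₐ[R]
      (R ⧸ I)[X] ⧸ Ideal.span {g.map (Ideal.Quotient.mk I)} :=
  ((Ideal.quotientEquivAlgOfEq R (sup_comm _ _)).trans
    (DoubleQuot.quotQuotEquivQuotSupₐ R (Ideal.span {g}) (I.map C)).symm).trans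
    ((Ideal.quotientEquivAlgOfEq R (Ideal.map_map C (AdjoinRoot.mk g))).trans
      (AdjoinRoot.quotEquivQuotMap g I))

theorem finrank_quotient_map_C_sup_span {K R : Type*} [CommRing K] [StrongRankCondition K]
    [CommRing R] [Algebra K R] (I : Ideal R) [Nontrivial (R ⧸ I)] [Module.Free K (R ⧸ I)]
    {g : R[X]} (hg : g.Monic) :
    Module.finrank K (R[X] ⧸ I.map C ⊔ Ideal.span {g}) =
      Module.finrank K (R ⧸ I) * g.natDegree := by
  rw [((quotientMapCSupSpanEquiv I g).toLinearEquiv.restrictScalars K).finrank_eq,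
    finrank_quotient_span_monic (hg.map _), hg.natDegree_map]

section SumCMulXPowSub

variable {R : Type*} [Semiring R] {c : ℕ → R} {r : ℕ}

theorem degree_sum_C_mul_X_pow_sub_succ_lt (c : ℕ → R) (s : ℕ) (hr : 0 < r) :
    degree (∑ i ∈ Finset.range s, C (c (i + 1)) * X ^ (r - (i + 1))) < r := by
  refine (degree_sum_le _ _).trans_lt ((Finset.sup_lt_iff (WithBot.bot_lt_coe r)).mpr ?_)
  intro i _
  calc degree (C (c (i + 1)) * X ^ (r - (i + 1))) ≤ (r - (i + 1) : ℕ) :=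
        degree_C_mul_X_pow_le _ _
    _ < r := by exact_mod_cast Nat.sub_lt hr i.succ_pos

theorem sum_C_mul_X_pow_sub_eq_X_pow_add (hc : c 0 = 1) (s : ℕ) :
    ∑ i ∈ Finset.range (s + 1), C (c i) * X ^ (r - i) =
      X ^ r + ∑ i ∈ Finset.range s, C (c (i + 1)) * X ^ (r - (i + 1)) := by
  rw [Finset.sum_range_succ', hc, C_1, one_mul, Nat.sub_zero, add_comm]

theorem monic_sum_C_mul_X_pow_sub (hc : c 0 = 1) (s : ℕ) (hr : 0 < r) :
    (∑ i ∈ Finset.range (s + 1), C (c i) * X ^ (r - i)).Monic := by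
  rw [sum_C_mul_X_pow_sub_eq_X_pow_add hc]
  exact monic_X_pow_add (degree_sum_C_mul_X_pow_sub_succ_lt c s hr)

theorem natDegree_sum_C_mul_X_pow_sub [Nontrivial R] (hc : c 0 = 1) (s : ℕ) (hr : 0 < r) :
    (∑ i ∈ Finset.range (s + 1), C (c i) * X ^ (r - i)).natDegree = r := by
  rw [sum_C_mul_X_pow_sub_eq_X_pow_add hc, natDegree_add_eq_left_of_degree_lt, natDegree_X_pow]
  exact (degree_sum_C_mul_X_pow_sub_succ_lt c s hr).trans_eq (degree_X_pow r).symm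

end SumCMulXPowSub

end Polynomial

namespace MvPolynomial

open Polynomial in
noncomputable def finTwoAlgEquiv (R : Type*) [CommRing R] :
    MvPolynomial (Fin 2) R ≃ₐ[R] R[X][X] :=
  (renameEquiv R (finSuccEquiv' 1)).trans
    ((optionEquivLeft R (Fin 1)).trans (Polynomial.mapAlgEquiv (uniqueAlgEquiv R (Fin 1))))

theorem finTwoAlgEquiv_X_zero {R : Type*} [CommRing R] :
    finTwoAlgEquiv R (X 0) = Polynomial.C Polynomial.X := by
  have : finSuccEquiv' (1 : Fin 2) 0 = some 0 := rfl
  simp [finTwoAlgEquiv, this]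

theorem finTwoAlgEquiv_X_one {R : Type*} [CommRing R] :
    finTwoAlgEquiv R (X 1) = Polynomial.X := by
  simp [finTwoAlgEquiv]

open Polynomial in
theorem finrank_quotient_span_X_pow_sum_X_pow_mul_X_pow (K : Type*) [CommRing K] [Nontrivial K]
    (s : ℕ) {r : ℕ} (hr : 0 < r) :
    Module.finrank K (MvPolynomial (Fin 2) K ⧸
      Ideal.span {(X 0 : MvPolynomial (Fin 2) K) ^ (s + 1),
        ∑ i ∈ Finset.range (s + 1), (X 0 : MvPolynomial (Fin 2) K) ^ i * X 1 ^ (r - i)}) =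
      r * (s + 1) := by
  set g : K[X][X] :=
    ∑ i ∈ Finset.range (s + 1), Polynomial.C (Polynomial.X ^ i) * Polynomial.X ^ (r - i)
  set I : Ideal K[X] := Ideal.span {Polynomial.X ^ (s + 1)}
  have hX : (Polynomial.X ^ (s + 1) : K[X]).Monic := monic_X_pow _
  have hI : Module.finrank K (K[X] ⧸ I) = s + 1 := by
    rw [finrank_quotient_span_eq_natDegree' hX, natDegree_X_pow]
  have : Module.Free K (K[X] ⧸ I) := hX.free_quotient
  have : Nontrivial (K[X] ⧸ I) := Module.nontrivial_of_finrank_pos (R := K) (by omega)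
  have hmap : I.map Polynomial.C ⊔ Ideal.span {g} =
      (Ideal.span {(X 0 : MvPolynomial (Fin 2) K) ^ (s + 1),
        ∑ i ∈ Finset.range (s + 1), (X 0 : MvPolynomial (Fin 2) K) ^ i * X 1 ^ (r - i)}).map
        (finTwoAlgEquiv K : MvPolynomial (Fin 2) K →+* K[X][X]) := by
    rw [Ideal.map_span, Ideal.map_span, Set.image_singleton, Set.image_pair, ← Ideal.span_insert]
    simp [g, map_sum, finTwoAlgEquiv_X_zero, finTwoAlgEquiv_X_one]
  rw [(Ideal.quotientEquivAlg _ _ (finTwoAlgEquiv K) hmap).toLinearEquiv.finrank_eq,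
    finrank_quotient_map_C_sup_span I (monic_sum_C_mul_X_pow_sub (pow_zero _) s hr), hI,
    natDegree_sum_C_mul_X_pow_sub (pow_zero _) s hr, mul_comm]

end MvPolynomial

theorem milnor_cohomology_dimension (s r : ℕ) (hs : 1 ≤ s) (hsr : s ≤ r) :
    Module.finrank (ZMod 2)
      (MvPolynomial (Fin 2) (ZMod 2) ⧸
        Ideal.span {(X 0 : MvPolynomial (Fin 2) (ZMod 2)) ^ (s + 1),
          ∑ i ∈ Finset.range (s + 1),
            (X 0 : MvPolynomial (Fin 2) (ZMod 2)) ^ i * X 1 ^ (r - i)}) = r * (s + 1) :=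
  finrank_quotient_span_X_pow_sum_X_pow_mul_X_pow (ZMod 2) s (by omega)
end

section
/- Let n ≡ 3 mod 4 and let J₁, J₂ be the linear maps on ℝ^(n+1) defined above (J₁ pairing consecutive coordinates as (x₀,x₁)↦(−x₁,x₀), and J₂ acting on blocks of four as (x₀,x₁,x₂,x₃)↦(−x₂,x₃,x₀,−x₁)). Then for every nonzero x ∈ ℝ^(n+1) and every λ ∈ ℝ, (J₁∘J₂)(x) ≠ λ·x. -/
/-!
Identify each block of four coordinates with a quaternion `x₀ + x₁ i + x₂ j + x₃ k`. Then `J₁`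
and `J₂` are left multiplication by `i` and `j`, so `J₁ J₂` is left multiplication by `k`.
Concretely, `J₁² = J₂² = -1` and `J₁ J₂ = -J₂ J₁` give `(J₁ J₂)² = -J₁² J₂² = -1`, and a
homogeneous map squaring to `-1` has no real eigenvalue, since `λ² + 1 ≠ 0`.
-/

theorem Fin.val_add_mod_of_dvd {N d : ℕ} (h : d ∣ N) (a b : Fin N) :
    ((a + b : Fin N) : ℕ) % d = ((a : ℕ) + b) % d := by
  rw [Fin.val_add, Nat.mod_mod_of_dvd _ h]

theorem Fin.val_sub_add_mod_of_dvd {N d : ℕ} [NeZero N] (h : d ∣ N) (a b : Fin N) :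
    (((a - b : Fin N) : ℕ) + b) % d = (a : ℕ) % d := by
  rw [← Fin.val_add_mod_of_dvd h, sub_add_cancel]

theorem comp_comp_comp_eq_neg_of_anticomm {M : Type*} [AddGroup M] {f g : M → M}
    (hf : ∀ x, f (f x) = -x) (hg : ∀ x, g (g x) = -x) (hfg : ∀ x, f (g x) = -g (f x))
    (hf_neg : ∀ x, f (-x) = -f x) (x : M) : f (g (f (g x))) = -x := by
  have hgf : g (f (g x)) = -f (g (g x)) := by rw [hfg (g x), neg_neg]
  rw [hgf, hg, hf_neg, hf, neg_neg]

theorem ne_smul_of_comp_self_eq_neg {K M : Type*} [Field K] [LinearOrder K]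
    [IsStrictOrderedRing K] [AddCommGroup M] [Module K M] {f : M → M}
    (hf_smul : ∀ (c : K) x, f (c • x) = c • f x) (hf : ∀ x, f (f x) = -x) {x : M} (hx : x ≠ 0)
    (c : K) : f x ≠ c • x := by
  intro hc
  have hzero : (c * c + 1) • x = 0 := by
    rw [add_smul, mul_smul, ← hc, ← hf_smul, ← hc, hf, one_smul, neg_add_cancel]
  have hc1 : c * c + 1 ≠ 0 := (add_pos_of_nonneg_of_pos (mul_self_nonneg c) one_pos).ne'
  exact hx ((smul_eq_zero.mp hzero).resolve_left hc1)

section QuaternionBlocks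

variable {R : Type*} [Ring R] {N : ℕ} [NeZero N]

def quatLeftMulI (x : Fin N → R) (i : Fin N) : R :=
  if Even (i : ℕ) then -x (i + 1) else x (i - 1)

def quatLeftMulJ (x : Fin N → R) (i : Fin N) : R :=
  if (i : ℕ) % 4 = 0 then -x (i + 2)
  else if (i : ℕ) % 4 = 1 then x (i + 2)
  else if (i : ℕ) % 4 = 2 then x (i - 2)
  else -x (i - 2)

theorem quatLeftMulI_smul (c : R) (x : Fin N → R) :
    quatLeftMulI (c • x) = c • quatLeftMulI x := by
  ext i
  simp only [quatLeftMulI, Pi.smul_apply, smul_eq_mul]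
  split_ifs <;> simp

theorem quatLeftMulJ_smul (c : R) (x : Fin N → R) :
    quatLeftMulJ (c • x) = c • quatLeftMulJ x := by
  ext i
  simp only [quatLeftMulJ, Pi.smul_apply, smul_eq_mul]
  split_ifs <;> simp

theorem quatLeftMulI_quatLeftMulI (h : 2 ∣ N) (x : Fin N → R) :
    quatLeftMulI (quatLeftMulI x) = -x := by
  ext i
  have := Fin.val_add_mod_of_dvd h i 1
  have := Fin.val_sub_add_mod_of_dvd h i 1
  have : ((1 : Fin N) : ℕ) % 2 = 1 := by simp [Nat.mod_mod_of_dvd _ h]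
  simp only [quatLeftMulI, Nat.even_iff, Pi.neg_apply]
  split_ifs <;> first | omega | simp

theorem quatLeftMulJ_quatLeftMulJ (h : 4 ∣ N) (x : Fin N → R) :
    quatLeftMulJ (quatLeftMulJ x) = -x := by
  ext i
  have := Fin.val_add_mod_of_dvd h i 2
  have := Fin.val_sub_add_mod_of_dvd h i 2
  have : ((2 : Fin N) : ℕ) % 4 = 2 := by simp [Nat.mod_mod_of_dvd _ h]
  simp only [quatLeftMulJ, Pi.neg_apply]
  split_ifs <;> first | omega | simp

theorem quatLeftMulI_quatLeftMulJ (h : 4 ∣ N) (x : Fin N → R) :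
    quatLeftMulI (quatLeftMulJ x) = -quatLeftMulJ (quatLeftMulI x) := by
  ext i
  have := Fin.val_add_mod_of_dvd h i 1
  have := Fin.val_sub_add_mod_of_dvd h i 1
  have := Fin.val_add_mod_of_dvd h i 2
  have := Fin.val_sub_add_mod_of_dvd h i 2
  have : ((1 : Fin N) : ℕ) % 4 = 1 := by simp [Nat.mod_mod_of_dvd _ h]
  have : ((2 : Fin N) : ℕ) % 4 = 2 := by simp [Nat.mod_mod_of_dvd _ h]
  obtain ⟨hi, hi'⟩ | ⟨hi, hi'⟩ | ⟨hi, hi'⟩ | ⟨hi, hi'⟩ :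
      (i : ℕ) % 4 = 0 ∧ (i : ℕ) % 2 = 0 ∨ (i : ℕ) % 4 = 1 ∧ (i : ℕ) % 2 = 1 ∨
      (i : ℕ) % 4 = 2 ∧ (i : ℕ) % 2 = 0 ∨ (i : ℕ) % 4 = 3 ∧ (i : ℕ) % 2 = 1 := by omega
  all_goals
    simp only [quatLeftMulI, quatLeftMulJ, Nat.even_iff, hi, hi', Pi.neg_apply, ↓reduceIte,
      Nat.reduceEqDiff]
    split_ifs <;> first | omega | simp [add_right_comm, sub_add_eq_add_sub, sub_right_comm]

end QuaternionBlocks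

theorem composite_involution_free (n : ℕ) (hn : n % 4 = 3)
    (J₁ J₂ : (Fin (n + 1) → ℝ) → (Fin (n + 1) → ℝ))
    (hJ₁ : ∀ (x : Fin (n + 1) → ℝ) (i : Fin (n + 1)),
      J₁ x i = if Even (i : ℕ) then -x (i + 1) else x (i - 1))
    (hJ₂ : ∀ (x : Fin (n + 1) → ℝ) (i : Fin (n + 1)),
      J₂ x i =
        if (i : ℕ) % 4 = 0 then -x (i + 2)
        else if (i : ℕ) % 4 = 1 then x (i + 2)
        else if (i : ℕ) % 4 = 2 then x (i - 2)
        else -x (i - 2)) :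
    ∀ x : Fin (n + 1) → ℝ, x ≠ 0 → ∀ lam : ℝ, J₁ (J₂ x) ≠ lam • x := by
  obtain rfl : J₁ = quatLeftMulI := funext fun x => funext (hJ₁ x)
  obtain rfl : J₂ = quatLeftMulJ := funext fun x => funext (hJ₂ x)
  have h4 : 4 ∣ n + 1 := by omega
  have h2 : 2 ∣ n + 1 := dvd_trans (by norm_num) h4
  have hsq (y : Fin (n + 1) → ℝ) :
      quatLeftMulI (quatLeftMulJ (quatLeftMulI (quatLeftMulJ y))) = -y :=
    comp_comp_comp_eq_neg_of_anticomm (quatLeftMulI_quatLeftMulI h2)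
      (quatLeftMulJ_quatLeftMulJ h4) (quatLeftMulI_quatLeftMulJ h4)
      (fun z => by rw [← neg_one_smul ℝ z, quatLeftMulI_smul, neg_one_smul]) y
  intro x hx lam
  exact ne_smul_of_comp_self_eq_neg (f := fun y => quatLeftMulI (quatLeftMulJ y))
    (fun c y => by simp only [quatLeftMulJ_smul, quatLeftMulI_smul]) hsq hx lam
end
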